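/- arXiv:0707.1966 — 3 statements merged into one kernel-verified Lean document; each statement's English description precedes it below -/
import Mathlib

section
/- Let w : E → ℝ be bounded and suppose y₀ ∈ E and ξ₀ ∈ K satisfy w(y₀) = N[w](y₀) = w(y₀+ξ₀) + l(ξ₀). Then for every ξ₁ ∈ K: w(y₀+ξ₀+ξ₁) + l(ξ₁) − w(y₀+ξ₀) ≥ l(ξ₀) + l(ξ₁) − l(ξ₀+ξ₁). Consequently, N[w](y₀+ξ₀) − w(y₀+ξ₀) ≥ inf_{ξ₁∈K} [ l(ξ₀) + l(ξ₁) − l(ξ₀+ξ₁) ]. -/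
noncomputable section

/-- The impulse obstacle operator `N[w](y) = inf_{ξ ∈ K} [w(y+ξ) + l(ξ)]`. -/
def impulseObstacle {E : Type*} [NormedAddCommGroup E] (K : Set E) (l : E → ℝ)
    (w : E → ℝ) (y : E) : ℝ :=
  ⨅ ξ : K, (w (y + ξ.1) + l ξ.1)

/-
Minimality of `ξ₀` at `y₀` compares the single jump `ξ₀` with the combined jump `ξ₀ + ξ₁ ∈ K`,
giving `w(y₀+ξ₀) + l(ξ₀) ≤ w(y₀+ξ₀+ξ₁) + l(ξ₀+ξ₁)`; infimizing over `ξ₁` then gives the bound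
on `N[w](y₀+ξ₀)`.
-/

theorem EReal.iInf_coe_le_coe_of_forall_lowerBound_le {ι : Sort*} {f : ι → ℝ} {a : ℝ}
    (h : ∀ c : ℝ, (∀ i, c ≤ f i) → c ≤ a) : ⨅ i, (f i : EReal) ≤ a :=
  EReal.ge_of_forall_gt_iff_ge.1 fun c hc =>
    EReal.coe_le_coe_iff.2 <| h c fun i => EReal.coe_le_coe_iff.1 (hc.trans_le (iInf_le _ i)).le

section ImpulseObstacle

variable {E : Type*} [NormedAddCommGroup E] {K : Set E} {l w : E → ℝ}

theorem impulseObstacle_bddBelow_range (hl0 : ∀ ξ ∈ K, 0 ≤ l ξ) (hw : BddBelow (Set.range w)) (y : E) :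
    BddBelow (Set.range fun ξ : K => w (y + ξ.1) + l ξ.1) := by
  obtain ⟨m, hm⟩ := hw
  refine ⟨m, ?_⟩
  rintro _ ⟨ξ, rfl⟩
  linarith [hm (Set.mem_range_self (y + ξ.1)), hl0 ξ.1 ξ.2]

theorem impulseObstacle_le (hl0 : ∀ ξ ∈ K, 0 ≤ l ξ) (hw : BddBelow (Set.range w)) (y : E)
    {ξ : E} (hξ : ξ ∈ K) : impulseObstacle K l w y ≤ w (y + ξ) + l ξ :=
  ciInf_le (impulseObstacle_bddBelow_range hl0 hw y) ⟨ξ, hξ⟩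

theorem le_impulseObstacle (hK : K.Nonempty) {y : E} {c : ℝ}
    (h : ∀ ξ ∈ K, c ≤ w (y + ξ) + l ξ) : c ≤ impulseObstacle K l w y :=
  have := hK.to_subtype
  le_ciInf fun ξ => h ξ.1 ξ.2

theorem impulse_subadditivity_gap_le (hKadd : ∀ a ∈ K, ∀ b ∈ K, a + b ∈ K)
    (hl0 : ∀ ξ ∈ K, 0 ≤ l ξ) (hw : BddBelow (Set.range w)) {y₀ ξ₀ : E} (hξ₀ : ξ₀ ∈ K)
    (hopt : impulseObstacle K l w y₀ = w (y₀ + ξ₀) + l ξ₀) {ξ₁ : E} (hξ₁ : ξ₁ ∈ K) :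
    l ξ₀ + l ξ₁ - l (ξ₀ + ξ₁) ≤ w (y₀ + ξ₀ + ξ₁) + l ξ₁ - w (y₀ + ξ₀) := by
  have hcombined := impulseObstacle_le hl0 hw y₀ (hKadd ξ₀ hξ₀ ξ₁ hξ₁)
  rw [hopt, ← add_assoc] at hcombined
  linarith

end ImpulseObstacle

theorem impulse_obstacle_gap_general
    {E : Type*} [NormedAddCommGroup E]
    (K : Set E)
    (hKadd : ∀ a ∈ K, ∀ b ∈ K, a + b ∈ K)
    (l : E → ℝ) (hl0 : ∀ ξ ∈ K, 0 ≤ l ξ)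
    (w : E → ℝ) (hwB : ∃ M : ℝ, ∀ x, |w x| ≤ M)
    (y₀ ξ₀ : E) (hξ₀ : ξ₀ ∈ K)
    (h₂ : impulseObstacle K l w y₀ = w (y₀ + ξ₀) + l ξ₀) :
    (∀ ξ₁ ∈ K,
      l ξ₀ + l ξ₁ - l (ξ₀ + ξ₁) ≤ w (y₀ + ξ₀ + ξ₁) + l ξ₁ - w (y₀ + ξ₀)) ∧
    (⨅ ξ₁ : K, ((l ξ₀ + l ξ₁.1 - l (ξ₀ + ξ₁.1) : ℝ) : EReal)) ≤
      ((impulseObstacle K l w (y₀ + ξ₀) - w (y₀ + ξ₀) : ℝ) : EReal) := by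
  have hw : BddBelow (Set.range w) := by
    obtain ⟨M, hM⟩ := hwB
    exact ⟨-M, by rintro _ ⟨x, rfl⟩; exact neg_le_of_abs_le (hM x)⟩
  have hgap := fun ξ₁ (hξ₁ : ξ₁ ∈ K) =>
    impulse_subadditivity_gap_le hKadd hl0 hw hξ₀ h₂ hξ₁
  refine ⟨hgap, EReal.iInf_coe_le_coe_of_forall_lowerBound_le fun c hc => ?_⟩
  have : c + w (y₀ + ξ₀) ≤ impulseObstacle K l w (y₀ + ξ₀) :=
    le_impulseObstacle ⟨ξ₀, hξ₀⟩ fun ξ₁ hξ₁ => by linarith [hc ⟨ξ₁, hξ₁⟩, hgap ξ₁ hξ₁]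
  linarith

/-- **Subadditivity gap estimate at an impulse minimizer.**
If `w(y₀) = N[w](y₀) = w(y₀+ξ₀) + l(ξ₀)`, then for every `ξ₁ ∈ K`
`w(y₀+ξ₀+ξ₁) + l(ξ₁) - w(y₀+ξ₀) ≥ l(ξ₀) + l(ξ₁) - l(ξ₀+ξ₁)`; consequently
`N[w](y₀+ξ₀) - w(y₀+ξ₀) ≥ inf_{ξ₁ ∈ K} [l(ξ₀) + l(ξ₁) - l(ξ₀+ξ₁)]`
(the infimum taken in the extended reals). -/
theorem impulse_obstacle_gap
    {E : Type*} [NormedAddCommGroup E] [InnerProductSpace ℝ E] [CompleteSpace E]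
    [TopologicalSpace.SeparableSpace E]
    (K : Set E) (hK : K.Nonempty) (hKcl : IsClosed K) (hKconv : Convex ℝ K)
    (hKadd : ∀ a ∈ K, ∀ b ∈ K, a + b ∈ K)
    (l : E → ℝ) (hl0 : ∀ ξ ∈ K, 0 ≤ l ξ)
    (w : E → ℝ) (hwB : ∃ M : ℝ, ∀ x, |w x| ≤ M)
    (y₀ ξ₀ : E) (hξ₀ : ξ₀ ∈ K)
    (h₁ : w y₀ = impulseObstacle K l w y₀)
    (h₂ : impulseObstacle K l w y₀ = w (y₀ + ξ₀) + l ξ₀) :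
    (∀ ξ₁ ∈ K,
      l ξ₀ + l ξ₁ - l (ξ₀ + ξ₁) ≤ w (y₀ + ξ₀ + ξ₁) + l ξ₁ - w (y₀ + ξ₀)) ∧
    (⨅ ξ₁ : K, ((l ξ₀ + l ξ₁.1 - l (ξ₀ + ξ₁.1) : ℝ) : EReal)) ≤
      ((impulseObstacle K l w (y₀ + ξ₀) - w (y₀ + ξ₀) : ℝ) : EReal) :=
  impulse_obstacle_gap_general K hKadd l hl0 w hwB y₀ ξ₀ hξ₀ h₂
end
end

section
/- (Switching chain lemma, minimizer's obstacle; this is the content of Step 2 in the uniqueness proof.) Let D be a finite set with at least two elements, c : D×D → ℝ with c(d,d̄) ≥ c₀ for some c₀ > 0 whenever d ≠ d̄, and let v, w : D → ℝ be functions such that v(d) ≤ v(d̄) + c(d,d̄) for all d ≠ d̄. Then for every d₀ ∈ D there exists d* ∈ D such that v(d₀) − w(d₀) ≤ v(d*) − w(d*) and w(d*) < min_{d̄≠d*} [ w(d̄) + c(d*,d̄) ]. -/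
/-!
Among the positions `d` with `v d₀ - w d₀ ≤ v d - w d` (a finite set containing `d₀`), take `d⋆`
minimizing `w`. If a switch `d̄ ≠ d⋆` had `w d̄ + c d⋆ d̄ ≤ w d⋆`, then `w d̄ < w d⋆` because the
cost is positive, while `v d⋆ ≤ v d̄ + c d⋆ d̄` gives `v d⋆ - w d⋆ ≤ v d̄ - w d̄`, so `d̄` would be
an admissible position with smaller `w`.
-/

lemma lt_ciInf_of_finite {ι α : Type*} [Finite ι] [Nonempty ι] [ConditionallyCompleteLinearOrder α]
    {f : ι → α} {a : α} (h : ∀ i, a < f i) : a < ⨅ i, f i := by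
  obtain ⟨i, hi⟩ := exists_eq_ciInf_of_finite (f := f)
  exact hi ▸ h i

lemma lt_add_of_isMinOn_of_le_add {D : Type*} {v w : D → ℝ} {a cost : ℝ} {d d' : D}
    (hmin : IsMinOn w {x | a ≤ v x - w x} d) (hd : a ≤ v d - w d)
    (hv : v d ≤ v d' + cost) (hcost : 0 < cost) :
    w d < w d' + cost := by
  by_contra! hle
  have hd' : a ≤ v d' - w d' := by linarith
  linarith [isMinOn_iff.1 hmin d' hd']

/-- **Switching chain lemma (minimizer's obstacle).**
`D` is a finite set with at least two elements, `c` a switching cost uniformly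
bounded below by `c₀ > 0` off the diagonal, and `v` satisfies the suboptimality
inequalities `v d ≤ v d̄ + c d d̄`.  Then from any starting position `d₀` one can
find `d⋆` with `v d₀ - w d₀ ≤ v d⋆ - w d⋆` at which `w` lies strictly below its
switching obstacle `min_{d̄ ≠ d⋆} (w d̄ + c d⋆ d̄)`. -/
theorem switching_chain_min
    {D : Type*} [Fintype D] [Nontrivial D]
    (c : D → D → ℝ) (c₀ : ℝ) (hc₀ : 0 < c₀)
    (hc : ∀ d d' : D, d ≠ d' → c₀ ≤ c d d')
    (v w : D → ℝ)
    (hv : ∀ d d' : D, d ≠ d' → v d ≤ v d' + c d d') :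
    ∀ d₀ : D, ∃ dstar : D,
      v d₀ - w d₀ ≤ v dstar - w dstar ∧
      w dstar < ⨅ d : {d : D // d ≠ dstar}, (w d.1 + c dstar d.1) := by
  intro d₀
  obtain ⟨dstar, hdstar, hmin⟩ :=
    Set.exists_min_image {d | v d₀ - w d₀ ≤ v d - w d} w (Set.toFinite _)
      ⟨d₀, Set.mem_ofPred.2 le_rfl⟩
  refine ⟨dstar, hdstar, ?_⟩
  have : Nonempty {d : D // d ≠ dstar} := nonempty_subtype.2 (exists_ne dstar)
  refine lt_ciInf_of_finite fun ⟨d, hd⟩ => ?_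
  exact lt_add_of_isMinOn_of_le_add (isMinOn_iff.2 hmin) hdstar (hv dstar d (Ne.symm hd))
    (hc₀.trans_le (hc dstar d (Ne.symm hd)))
end

section
/- (Switching chain lemma, maximizer's obstacle; this is the content of Step 3 in the uniqueness proof.) Let D be a finite set with at least two elements, c : D×D → ℝ with c(d,d̄) ≥ c₀ for some c₀ > 0 whenever d ≠ d̄, and let v, w : D → ℝ be functions such that w(d) ≥ w(d̄) − c(d,d̄) for all d ≠ d̄. Then for every d₀ ∈ D there exists d* ∈ D such that v(d₀) − w(d₀) ≤ v(d*) − w(d*) and v(d*) > max_{d̄≠d*} [ v(d̄) − c(d*,d̄) ]. -/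
/-! Take `d⋆` maximising `v - w`, and among those maximisers one maximising `v`, i.e. a
lexicographic maximiser of `(v - w, v)`. For `d ≠ d⋆` either `v d - w d < v d⋆ - w d⋆`, and
then the superoptimality of `w` gives `v d - c d⋆ d < v d⋆`, or `v d - w d = v d⋆ - w d⋆`
with `v d ≤ v d⋆`, and then the positive switching cost does. -/

theorem sub_lt_of_toLex_sub_le {α : Type*} [AddCommGroup α] [PartialOrder α]
    [IsOrderedAddMonoid α] {a b a' b' k : α} (hk : 0 < k) (hb : b - k ≤ b')
    (h : toLex (a - b, a) ≤ toLex (a' - b', a')) : a - k < a' := by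
  rcases Prod.Lex.toLex_le_toLex.1 h with hlt | ⟨-, hle⟩
  · calc a - k = (a - b) + (b - k) := by abel
      _ < (a' - b') + b' := add_lt_add_of_lt_of_le hlt hb
      _ = a' := by abel
  · exact (sub_lt_self a hk).trans_le hle

theorem ciSup_lt_of_finite {ι α : Type*} [Finite ι] [Nonempty ι]
    [ConditionallyCompleteLinearOrder α] {f : ι → α} {a : α} (h : ∀ i, f i < a) :
    ⨆ i, f i < a := by
  obtain ⟨i, hi⟩ := exists_eq_ciSup_of_finite (f := f)
  exact hi ▸ h i

/-- **Switching chain lemma (maximizer's obstacle).**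
`D` is a finite set with at least two elements, `c` a switching cost uniformly
bounded below by `c₀ > 0` off the diagonal, and `w` satisfies the superoptimality
inequalities `w d ≥ w d̄ - c d d̄`.  Then from any starting position `d₀` one can
find `d⋆` with `v d₀ - w d₀ ≤ v d⋆ - w d⋆` at which `v` lies strictly above its
reward-type switching obstacle `max_{d̄ ≠ d⋆} (v d̄ - c d⋆ d̄)`. -/
theorem switching_chain_max
    {D : Type*} [Fintype D] [Nontrivial D]
    (c : D → D → ℝ) (c₀ : ℝ) (hc₀ : 0 < c₀)
    (hc : ∀ d d' : D, d ≠ d' → c₀ ≤ c d d')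
    (v w : D → ℝ)
    (hw : ∀ d d' : D, d ≠ d' → w d' - c d d' ≤ w d) :
    ∀ d₀ : D, ∃ dstar : D,
      v d₀ - w d₀ ≤ v dstar - w dstar ∧
      (⨆ d : {d : D // d ≠ dstar}, (v d.1 - c dstar d.1)) < v dstar := by
  intro d₀
  have : Nonempty D := ⟨d₀⟩
  obtain ⟨dstar, hmax⟩ := Finite.exists_max fun d => toLex (v d - w d, v d)
  have : Nonempty {d : D // d ≠ dstar} := nonempty_subtype.2 (exists_ne dstar)
  refine ⟨dstar, (Prod.Lex.toLex_le_toLex'.1 (hmax d₀)).1, ciSup_lt_of_finite ?_⟩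
  rintro ⟨d, hd⟩
  exact sub_lt_of_toLex_sub_le (hc₀.trans_le (hc dstar d hd.symm)) (hw dstar d hd.symm)
    (hmax d)
end
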